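/- Let a, b, p, q be positive real numbers with b < 1. Then the double integral of u^{a-1} (1-u)^{b-1} v^{p-1} (1-v)^{q-1} over the simplex Δ = {(u,v) : 0 ≤ u ≤ v ≤ 1} equals the convergent series Σ_{n=0}^∞ [Γ(a+p+n) Γ(q) / Γ(a+p+q+n)] · [(1-b, n) / (1, n)] · 1/(a+n). -/

import Mathlib

/-!
For `0 ≤ u < 1` the binomial series gives `(1 - u) ^ (b - 1) = ∑ₙ (1 - b, n) / n! • uⁿ`;
for `b < 1` all its coefficients are nonnegative, so by Tonelli the integral over the simplex
may be taken term by term in `ℝ≥0∞`. Integrating `u ^ (a + n - 1)` over `0 ≤ u ≤ v` gives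
`v ^ (a + n) / (a + n)`, after which the `n`-th term is `B(a + p + n, q) / (a + n)`. The
integrand is dominated by the product density on the unit square, with integral
`B(a, b) B(p, q) < ∞`; this finiteness yields both the summability of the series and the
agreement of the Lebesgue integral with the Bochner one.
-/

open MeasureTheory Real Polynomial Set
open scoped ENNReal Nat

theorem Ring.choose_add_sub_one_eq_ascPochhammer_eval_div {K : Type*} [Field K] [CharZero K]
    (c : K) (n : ℕ) : Ring.choose (c + n - 1) n = (ascPochhammer K n).eval c / n ! := by
  rw [Ring.choose_eq_smul, smul_eq_mul, Polynomial.descPochhammer_smeval_eq_ascPochhammer,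
    Polynomial.ascPochhammer_smeval_cast, Polynomial.ascPochhammer_smeval_eq_eval,
    show c + n - 1 - n + 1 = c by ring, inv_mul_eq_div]

theorem hasSum_ascPochhammer_div_factorial_mul_pow (c : ℝ) {u : ℝ} (hu : |u| < 1) :
    HasSum (fun n : ℕ => (ascPochhammer ℝ n).eval c / n ! * u ^ n) ((1 - u) ^ (-c)) := by
  have h := (Real.one_div_one_sub_rpow_hasFPowerSeriesOnBall_zero c).hasSum
    (y := u) (by simpa [enorm_eq_nnnorm, ← NNReal.coe_lt_one] using hu)
  simp only [FormalMultilinearSeries.ofScalars_apply_eq, zero_add, smul_eq_mul,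
    Ring.choose_add_sub_one_eq_ascPochhammer_eval_div] at h
  rwa [Real.rpow_neg (by linarith [le_abs_self u]), ← one_div]

theorem ascPochhammer_nonneg {S : Type*} [Semiring S] [PartialOrder S] [IsOrderedRing S]
    {s : S} (hs : 0 ≤ s) (n : ℕ) : 0 ≤ (ascPochhammer S n).eval s := by
  induction n with
  | zero => simp
  | succ n ih => rw [ascPochhammer_succ_eval]; exact mul_nonneg ih (add_nonneg hs n.cast_nonneg)

theorem setLIntegral_Icc_rpow_sub_one {r v : ℝ} (hr : 0 < r) (hv : 0 ≤ v) :
    ∫⁻ u in Icc 0 v, ENNReal.ofReal (u ^ (r - 1)) = ENNReal.ofReal (v ^ r / r) := by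
  have hint : IntegrableOn (fun u : ℝ => u ^ (r - 1)) (Ioc 0 v) :=
    (intervalIntegrable_iff_integrableOn_Ioc_of_le hv).1
      (intervalIntegral.intervalIntegrable_rpow' (by linarith))
  rw [← Measure.restrict_congr_set Ioc_ae_eq_Icc, ← ofReal_integral_eq_lintegral_ofReal hint
      (ae_restrict_of_forall_mem measurableSet_Ioc fun u hu => by have := hu.1.le; positivity),
    ← intervalIntegral.integral_of_le hv, integral_rpow (Or.inl (by linarith)),
    sub_add_cancel, Real.zero_rpow hr.ne', sub_zero]

theorem setLIntegral_Icc_rpow_mul_one_sub_rpow {x y : ℝ} (hx : 0 < x) (hy : 0 < y) :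
    ∫⁻ t in Icc 0 1, ENNReal.ofReal (t ^ (x - 1) * (1 - t) ^ (y - 1)) =
      ENNReal.ofReal (ProbabilityTheory.beta x y) := by
  have hB := ProbabilityTheory.beta_pos hx hy
  have h := ProbabilityTheory.lintegral_betaPDF_eq_one hx hy
  simp_rw [ProbabilityTheory.lintegral_betaPDF, mul_assoc,
    ENNReal.ofReal_mul (one_div_pos.2 hB).le] at h
  rw [lintegral_const_mul' _ _ ENNReal.ofReal_ne_top, mul_comm] at h
  rw [← Measure.restrict_congr_set Ioo_ae_eq_Icc, ENNReal.eq_inv_of_mul_eq_one_left h,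
    ← ENNReal.ofReal_inv_of_pos (by positivity), one_div, inv_inv]

theorem setLIntegral_Icc_rpow_mul_one_sub_rpow_eq_tsum {a b v : ℝ} (ha : 0 < a) (hb : b ≤ 1)
    (hv0 : 0 ≤ v) (hv1 : v ≤ 1) :
    ∫⁻ u in Icc 0 v, ENNReal.ofReal (u ^ (a - 1) * (1 - u) ^ (b - 1)) =
      ∑' n : ℕ, ENNReal.ofReal
        ((ascPochhammer ℝ n).eval (1 - b) / n ! * (v ^ (a + n) / (a + n))) := by
  set c : ℕ → ℝ := fun n => (ascPochhammer ℝ n).eval (1 - b) / (n ! : ℝ)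
  have hc (n : ℕ) : 0 ≤ c n := div_nonneg (ascPochhammer_nonneg (by linarith) n) (by positivity)
  have hexpand : ∀ᵐ u ∂volume.restrict (Icc 0 v),
      ENNReal.ofReal (u ^ (a - 1) * (1 - u) ^ (b - 1)) =
        ∑' n : ℕ, ENNReal.ofReal (c n) * ENNReal.ofReal (u ^ (a + n - 1)) := by
    rw [← Measure.restrict_congr_set Ioo_ae_eq_Icc]
    refine ae_restrict_of_forall_mem measurableSet_Ioo fun u ⟨hu0, huv⟩ => ?_
    have hseries : HasSum (fun n : ℕ => c n * u ^ (a + n - 1))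
        (u ^ (a - 1) * (1 - u) ^ (b - 1)) := by
      have h := (hasSum_ascPochhammer_div_factorial_mul_pow (1 - b)
        (abs_lt.2 ⟨by linarith, by linarith⟩)).mul_left (u ^ (a - 1))
      have hterm (n : ℕ) : u ^ (a - 1) * ((ascPochhammer ℝ n).eval (1 - b) / n ! * u ^ n) =
          c n * u ^ (a + n - 1) := by
        rw [mul_left_comm, ← Real.rpow_natCast, ← Real.rpow_add hu0, add_sub_right_comm]
      simpa only [hterm, neg_sub] using h
    rw [← hseries.tsum_eq, ENNReal.ofReal_tsum_of_nonneg
      (fun n => mul_nonneg (hc n) (by positivity)) hseries.summable]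
    exact tsum_congr fun n => ENNReal.ofReal_mul (hc n)
  rw [lintegral_congr_ae hexpand, lintegral_tsum fun n => by fun_prop]
  refine tsum_congr fun n => ?_
  rw [lintegral_const_mul _ (by fun_prop), setLIntegral_Icc_rpow_sub_one (by positivity) hv0,
    ← ENNReal.ofReal_mul (hc n)]

def simplex : Set (ℝ × ℝ) := {w | 0 ≤ w.1 ∧ w.1 ≤ w.2 ∧ w.2 ≤ 1}

theorem measurableSet_simplex : MeasurableSet simplex :=
  (measurableSet_le measurable_const measurable_fst).inter
    ((measurableSet_le measurable_fst measurable_snd).inter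
      (measurableSet_le measurable_snd measurable_const))

theorem setLIntegral_simplex_mul {F G : ℝ → ℝ≥0∞} (hF : Measurable F)
    (hG : Measurable G) :
    ∫⁻ w in simplex, F w.1 * G w.2 = ∫⁻ v in Icc 0 1, (∫⁻ u in Icc 0 v, F u) * G v := by
  have hfiber : ∀ v, ∫⁻ u, simplex.indicator (fun w => F w.1 * G w.2) (u, v) =
      (Icc 0 1).indicator (fun v => (∫⁻ u in Icc 0 v, F u) * G v) v := by
    intro v
    by_cases hv : v ∈ Icc (0 : ℝ) 1
    · rw [indicator_of_mem hv, ← lintegral_mul_const _ hF,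
        ← lintegral_indicator measurableSet_Icc]
      congr with u
      by_cases hu : u ∈ Icc 0 v
      · rw [indicator_of_mem hu,
          indicator_of_mem (show (u, v) ∈ simplex from ⟨hu.1, hu.2, hv.2⟩)]
      · rw [indicator_of_notMem hu, indicator_of_notMem fun h => hu ⟨h.1, h.2.1⟩]
    · rw [indicator_of_notMem hv]
      refine (lintegral_congr fun u => indicator_of_notMem ?_ _).trans lintegral_zero
      exact fun h => hv ⟨h.1.trans h.2.1, h.2.2⟩
  have hmeas : Measurable fun w : ℝ × ℝ => F w.1 * G w.2 :=
    (hF.comp measurable_fst).mul (hG.comp measurable_snd)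
  rw [← lintegral_indicator measurableSet_simplex, Measure.volume_eq_prod,
    lintegral_prod_symm' _ (hmeas.indicator measurableSet_simplex), lintegral_congr hfiber,
    lintegral_indicator measurableSet_Icc]

noncomputable def betaSimplexDensity (a b p q : ℝ) (w : ℝ × ℝ) : ℝ :=
  w.1 ^ (a - 1) * (1 - w.1) ^ (b - 1) * w.2 ^ (p - 1) * (1 - w.2) ^ (q - 1)

noncomputable def betaSimplexTerm (a b p q : ℝ) (n : ℕ) : ℝ :=
  Real.Gamma (a + p + n) * Real.Gamma q / Real.Gamma (a + p + q + n) *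
    ((ascPochhammer ℝ n).eval (1 - b) / (ascPochhammer ℝ n).eval 1) * (1 / (a + n))

section BetaSimplex

variable {a b p q : ℝ}

theorem betaSimplexDensity_nonneg {w : ℝ × ℝ} (hw : w ∈ simplex) :
    0 ≤ betaSimplexDensity a b p q w := by
  obtain ⟨hu0, huv, hv1⟩ := hw
  have : 0 ≤ 1 - w.1 := by linarith
  have : 0 ≤ 1 - w.2 := by linarith
  have : 0 ≤ w.2 := by linarith
  unfold betaSimplexDensity
  positivity

theorem setLIntegral_betaSimplexDensity_eq_iterate :
    ∫⁻ w in simplex, ENNReal.ofReal (betaSimplexDensity a b p q w) =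
      ∫⁻ v in Icc 0 1, (∫⁻ u in Icc 0 v, ENNReal.ofReal (u ^ (a - 1) * (1 - u) ^ (b - 1))) *
        ENNReal.ofReal (v ^ (p - 1) * (1 - v) ^ (q - 1)) := by
  rw [← setLIntegral_simplex_mul (by fun_prop) (by fun_prop)]
  refine setLIntegral_congr_fun measurableSet_simplex fun w ⟨hu0, huv, hv1⟩ => ?_
  have hu1 : 0 ≤ 1 - w.1 := by linarith
  rw [← ENNReal.ofReal_mul (by positivity), betaSimplexDensity, mul_assoc]

theorem betaSimplexTerm_nonneg (ha : 0 < a) (hb : b ≤ 1) (hp : 0 < p) (hq : 0 < q) (n : ℕ) :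
    0 ≤ betaSimplexTerm a b p q n := by
  have := ascPochhammer_nonneg (show 0 ≤ 1 - b by linarith) n
  have := ascPochhammer_pos n (1 : ℝ) one_pos
  have := Real.Gamma_pos_of_pos (show 0 < a + p + n by positivity)
  have := Real.Gamma_pos_of_pos (show 0 < a + p + q + n by positivity)
  have := Real.Gamma_pos_of_pos hq
  unfold betaSimplexTerm
  positivity

theorem setLIntegral_betaSimplexDensity_eq_tsum (ha : 0 < a) (hb : b ≤ 1) (hp : 0 < p)
    (hq : 0 < q) :
    ∫⁻ w in simplex, ENNReal.ofReal (betaSimplexDensity a b p q w) =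
      ∑' n : ℕ, ENNReal.ofReal (betaSimplexTerm a b p q n) := by
  set c : ℕ → ℝ := fun n => (ascPochhammer ℝ n).eval (1 - b) / (n ! : ℝ) / (a + n)
  have hcoef (n : ℕ) : 0 ≤ (ascPochhammer ℝ n).eval (1 - b) / (n ! : ℝ) :=
    div_nonneg (ascPochhammer_nonneg (by linarith) n) (by positivity)
  have hc (n : ℕ) : 0 ≤ c n := div_nonneg (hcoef n) (by positivity)
  have hinner : ∀ᵐ v ∂volume.restrict (Icc 0 1),
      (∫⁻ u in Icc 0 v, ENNReal.ofReal (u ^ (a - 1) * (1 - u) ^ (b - 1))) *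
          ENNReal.ofReal (v ^ (p - 1) * (1 - v) ^ (q - 1)) =
        ∑' n : ℕ, ENNReal.ofReal (c n) *
          ENNReal.ofReal (v ^ (a + p + n - 1) * (1 - v) ^ (q - 1)) := by
    -- `0 < v` is needed to merge the powers of `v`, since `0 ^ 0 = 1` for `rpow`
    rw [← Measure.restrict_congr_set Ioc_ae_eq_Icc]
    refine ae_restrict_of_forall_mem measurableSet_Ioc fun v ⟨hv0, hv1⟩ => ?_
    have hv1' : 0 ≤ 1 - v := by linarith
    rw [setLIntegral_Icc_rpow_mul_one_sub_rpow_eq_tsum ha hb hv0.le hv1, ← ENNReal.tsum_mul_right]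
    refine tsum_congr fun n => ?_
    rw [← ENNReal.ofReal_mul (mul_nonneg (hcoef n) (by positivity)),
      ← ENNReal.ofReal_mul (hc n)]
    congr 1
    rw [show a + p + n - 1 = (a + n) + (p - 1) by ring, Real.rpow_add hv0 (a + n)]
    ring
  rw [setLIntegral_betaSimplexDensity_eq_iterate, lintegral_congr_ae hinner,
    lintegral_tsum fun n => by fun_prop]
  refine tsum_congr fun n => ?_
  rw [lintegral_const_mul _ (by fun_prop),
    setLIntegral_Icc_rpow_mul_one_sub_rpow (by positivity : 0 < a + p + n) hq,
    ← ENNReal.ofReal_mul (hc n)]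
  congr 1
  simp only [betaSimplexTerm, ProbabilityTheory.beta, ascPochhammer_eval_one, c]
  rw [show a + p + n + q = a + p + q + n by ring]
  ring

theorem setLIntegral_betaSimplexDensity_ne_top (ha : 0 < a) (hb : 0 < b) (hp : 0 < p)
    (hq : 0 < q) : ∫⁻ w in simplex, ENNReal.ofReal (betaSimplexDensity a b p q w) ≠ ∞ := by
  rw [setLIntegral_betaSimplexDensity_eq_iterate]
  refine ne_top_of_le_ne_top ?_ (setLIntegral_mono (by fun_prop) fun v hv =>
    mul_le_mul_left (lintegral_mono_set (Icc_subset_Icc_right hv.2)) _)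
  rw [lintegral_const_mul _ (by fun_prop), setLIntegral_Icc_rpow_mul_one_sub_rpow ha hb,
    setLIntegral_Icc_rpow_mul_one_sub_rpow hp hq]
  exact ENNReal.mul_ne_top ENNReal.ofReal_ne_top ENNReal.ofReal_ne_top

theorem hasSum_betaSimplexTerm (ha : 0 < a) (hb0 : 0 < b) (hb1 : b < 1) (hp : 0 < p)
    (hq : 0 < q) :
    HasSum (betaSimplexTerm a b p q) (∫ w in simplex, betaSimplexDensity a b p q w) := by
  have hlintegral := setLIntegral_betaSimplexDensity_eq_tsum ha hb1.le hp hq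
  have hfinite := hlintegral ▸ setLIntegral_betaSimplexDensity_ne_top ha hb0 hp hq
  rw [integral_eq_lintegral_of_nonneg_ae
      (ae_restrict_of_forall_mem measurableSet_simplex fun _ => betaSimplexDensity_nonneg)
      (by unfold betaSimplexDensity; fun_prop),
    hlintegral, ENNReal.tsum_toReal_eq fun _ => ENNReal.ofReal_ne_top]
  simpa only [ENNReal.toReal_ofReal (betaSimplexTerm_nonneg ha hb1.le hp hq _)]
    using ENNReal.hasSum_toReal hfinite

end BetaSimplex

/-- The double integral of the Beta-type density over the simplex equals the convergent
series `Σ_n B(a+p+n, q) ((1-b,n)/(1,n)) / (a+n)`, where `(α,n)` is the ascending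
Pochhammer symbol and `B(x,y) = Γ(x)Γ(y)/Γ(x+y)`. -/
theorem beta_double_integral_series (a b p q : ℝ)
    (ha : 0 < a) (hb0 : 0 < b) (hb1 : b < 1) (hp : 0 < p) (hq : 0 < q) :
    Summable (fun n : ℕ =>
      Real.Gamma (a + p + n) * Real.Gamma q / Real.Gamma (a + p + q + n) *
        ((ascPochhammer ℝ n).eval (1 - b) / (ascPochhammer ℝ n).eval 1) *
        (1 / (a + n))) ∧
    ∫ w in {w : ℝ × ℝ | 0 ≤ w.1 ∧ w.1 ≤ w.2 ∧ w.2 ≤ 1},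
      w.1 ^ (a - 1) * (1 - w.1) ^ (b - 1) * w.2 ^ (p - 1) * (1 - w.2) ^ (q - 1) =
    ∑' n : ℕ,
      Real.Gamma (a + p + n) * Real.Gamma q / Real.Gamma (a + p + q + n) *
        ((ascPochhammer ℝ n).eval (1 - b) / (ascPochhammer ℝ n).eval 1) *
        (1 / (a + n)) := by
  have hsum := hasSum_betaSimplexTerm ha hb0 hb1 hp hq
  exact ⟨hsum.summable, hsum.tsum_eq.symm⟩
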